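/- Assume the Continuum Hypothesis (2^ℵ₀ = ℵ₁). If X is a Corson compact space that has a topological basis of cardinality at most ℵ₁, then the cardinality of X is at most ℵ₁. -/

import Mathlib

/-!
Let `e : X → ℝ^ι` be the embedding with countable supports and let `D` be a dense set with
`#D ≤ #B`, one point from each nonempty basic open set. A coordinate that is nonzero somewhere is
nonzero on an open set, hence at a point of `D`; so all supports lie in a set `T ⊆ ι` of size
at most `#B · ℵ₀`. A point is determined by the graph of `e x` on its support, a countable subset of
`T × ℝ`, which gives `#X ≤ (#B · 𝔠)^ℵ₀`. Under CH this is `𝔠^ℵ₀ = 𝔠 = ℵ₁`.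
-/

open Cardinal

/-- A topological space is Corson compact if it is compact Hausdorff and embeds into some
Tychonoff cube `[0,1]^ι` in such a way that every point has countable support. -/
def IsCorsonCompact (X : Type u) [TopologicalSpace X] : Prop :=
  CompactSpace X ∧ T2Space X ∧
    ∃ (ι : Type u) (e : X → (ι → Set.Icc (0:ℝ) 1)), Topology.IsEmbedding e ∧
      ∀ x : X, {ξ : ι | (e x ξ : ℝ) ≠ 0}.Countable

open Set Function TopologicalSpace

theorem TopologicalSpace.IsTopologicalBasis.exists_dense_mk_le {X : Type*} [TopologicalSpace X]
    {B : Set (Set X)} (hB : IsTopologicalBasis B) : ∃ D : Set X, Dense D ∧ #D ≤ #B := by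
  choose p hp using fun U : {U ∈ B | U.Nonempty} => U.2.2
  refine ⟨range p, hB.dense_iff.2 fun U hU hne => ?_, ?_⟩
  · exact ⟨p ⟨U, hU, hne⟩, hp ⟨U, hU, hne⟩, mem_range_self _⟩
  · exact mk_range_le.trans (mk_le_mk_of_subset (sep_subset _ _))

theorem support_subset_biUnion_of_dense {X ι M : Type*} [TopologicalSpace X] [TopologicalSpace M]
    [Zero M] [T1Space M] {e : X → ι → M} (he : Continuous e) {D : Set X} (hD : Dense D) (x : X) :
    support (e x) ⊆ ⋃ d ∈ D, support (e d) := by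
  intro ξ hξ
  have hopen : IsOpen {y | e y ξ ≠ 0} :=
    isOpen_compl_singleton.preimage ((continuous_apply ξ).comp he)
  obtain ⟨d, hd, hdD⟩ := hD.inter_open_nonempty _ hopen ⟨x, hξ⟩
  exact mem_biUnion hdD hd

theorem mk_biUnion_support_le {X ι : Type u} {M : Type*} [Zero M] {e : X → ι → M}
    (hc : ∀ x, (support (e x)).Countable) (D : Set X) :
    #(⋃ d ∈ D, support (e d)) ≤ #D * ℵ₀ :=
  (mk_biUnion_le _ D).trans <|
    mul_le_mul_right (ciSup_le' fun d : D => le_aleph0_iff_set_countable.2 (hc d)) _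

theorem image_graph_support_injective {ι M : Type*} [Zero M] :
    Injective fun f : ι → M => (fun ξ => (ξ, f ξ)) '' support f := by
  have agree : ∀ f g : ι → M,
      (fun ξ => (ξ, f ξ)) '' support f = (fun ξ => (ξ, g ξ)) '' support g →
      ∀ ξ, f ξ ≠ 0 → f ξ = g ξ := by
    intro f g hfg ξ hξ
    obtain ⟨η, -, hη⟩ : (ξ, f ξ) ∈ (fun ξ => (ξ, g ξ)) '' support g :=
      hfg ▸ mem_image_of_mem _ hξ
    simp only [Prod.mk.injEq] at hη
    rw [← hη.2, hη.1]
  intro f g hfg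
  funext ξ
  by_cases hf : f ξ = 0
  · by_cases hg : g ξ = 0
    · rw [hf, hg]
    · exact (agree g f hfg.symm ξ hg).symm
  · exact agree f g hfg ξ hf

theorem mk_le_of_injective_of_support_subset {X ι : Type u} {M : Type v} [Zero M]
    {e : X → ι → M} (he : Injective e) (hc : ∀ x, (support (e x)).Countable) {T : Set ι}
    (hT : ∀ x, support (e x) ⊆ T) :
    lift.{v} #X ≤ max (lift.{v} #T * lift.{u} #M) ℵ₀ ^ ℵ₀ := by
  let graph : X → {s : Set (ι × M) // s ⊆ T ×ˢ Set.univ ∧ #s ≤ ℵ₀} := fun x =>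
    ⟨(fun ξ => (ξ, e x ξ)) '' support (e x),
      image_subset_iff.2 fun ξ hξ => ⟨hT x hξ, mem_univ _⟩,
      le_aleph0_iff_set_countable.2 ((hc x).image _)⟩
  have hgraph : Injective graph := fun a b hab =>
    he (image_graph_support_injective (congrArg Subtype.val hab))
  calc lift.{v} #X = #(ULift.{v} X) := (mk_uLift X).symm
    _ ≤ #{s : Set (ι × M) // s ⊆ T ×ˢ Set.univ ∧ #s ≤ ℵ₀} :=
        mk_le_of_injective (hgraph.comp ULift.down_injective)
    _ ≤ max #(T ×ˢ (Set.univ : Set M)) ℵ₀ ^ ℵ₀ := mk_bounded_subset_le _ _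
    _ = max (lift.{v} #T * lift.{u} #M) ℵ₀ ^ ℵ₀ := by
        rw [mk_congr (Equiv.Set.prod _ _), mk_prod, mk_univ]

theorem mk_le_of_continuous_injective_of_countable_support {X ι : Type u} [TopologicalSpace X]
    {e : X → ι → ℝ} (hcont : Continuous e) (hinj : Injective e)
    (hc : ∀ x, (support (e x)).Countable) {B : Set (Set X)} (hB : IsTopologicalBasis B) :
    #X ≤ max (#B * 𝔠) ℵ₀ ^ ℵ₀ := by
  obtain ⟨D, hD, hDB⟩ := hB.exists_dense_mk_le
  calc #X ≤ max (#(⋃ d ∈ D, support (e d)) * 𝔠) ℵ₀ ^ ℵ₀ := by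
        simpa [mk_real] using mk_le_of_injective_of_support_subset hinj hc
          (support_subset_biUnion_of_dense hcont hD)
    _ ≤ max (#B * ℵ₀ * 𝔠) ℵ₀ ^ ℵ₀ := power_le_power_right <| max_le_max_right _ <|
        mul_le_mul_left ((mk_biUnion_support_le hc D).trans (mul_le_mul_left hDB _)) _
    _ = max (#B * 𝔠) ℵ₀ ^ ℵ₀ := by rw [mul_assoc, aleph0_mul_continuum]

/-- Assuming the Continuum Hypothesis, a Corson compact space with a topological basis of
cardinality at most `ℵ₁` has cardinality at most `ℵ₁`. -/
theorem stmt_7 (hCH : (2 : Cardinal.{u}) ^ ℵ₀ = aleph 1)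
    (X : Type u) [TopologicalSpace X] (hX : IsCorsonCompact X)
    (hw : ∃ B : Set (Set X), TopologicalSpace.IsTopologicalBasis B ∧ #B ≤ aleph 1) :
    #X ≤ aleph 1 := by
  obtain ⟨-, -, ι, e, he, hc⟩ := hX
  obtain ⟨B, hB, hBc⟩ := hw
  rw [← hCH, two_power_aleph0] at hBc ⊢
  have hcont : Continuous fun x ξ => (e x ξ : ℝ) :=
    continuous_pi fun ξ => continuous_subtype_val.comp ((continuous_apply ξ).comp he.continuous)
  have hinj : Injective fun x ξ => (e x ξ : ℝ) := fun a b h =>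
    he.injective (funext fun ξ => Subtype.ext (congrFun h ξ))
  calc #X ≤ max (#B * 𝔠) ℵ₀ ^ ℵ₀ :=
        mk_le_of_continuous_injective_of_countable_support hcont hinj hc hB
    _ ≤ 𝔠 ^ ℵ₀ := power_le_power_right <|
        max_le ((mul_le_mul_left hBc _).trans continuum_mul_self.le) aleph0_le_continuum
    _ = 𝔠 := continuum_power_aleph0
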